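/- arXiv:2310.02471 — 3 statements merged into one kernel-verified Lean document; each statement's English description precedes it below -/
import Mathlib

section
/- Let g be a finite-dimensional nilpotent real Lie algebra equipped with a hypercomplex structure (I,J,K), and let ∇ be its Obata connection. Assume that ∇ is flat and that ∇_X is a nilpotent endomorphism of g for every X ∈ g (i.e. the algebraic holonomy representation is unipotent). Then g is H-solvable: there exists k ≥ 0 with g_k^H = 0. -/
open Submodule

section Hyper

variable {L : Type*} [LieRing L] [LieAlgebra ℝ L]

/-- A complex structure operator on a real Lie algebra: `I² = -id` and the integrability
identity `[IX,IY] = [X,Y] + I[IX,Y] + I[X,IY]` (equivalent to `g^{1,0}` being a subalgebra). -/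
def IsComplexStructureOp (I : L →ₗ[ℝ] L) : Prop :=
  (∀ x, I (I x) = -x) ∧ ∀ x y : L, ⁅I x, I y⁆ = ⁅x, y⁆ + I ⁅I x, y⁆ + I ⁅x, I y⁆

/-- A hypercomplex structure: a triple of complex structure operators with `IJ = K`
(together with `I² = J² = K² = -id` this gives the quaternionic relations). -/
structure IsHypercomplex (I J K : L →ₗ[ℝ] L) : Prop where
  hI : IsComplexStructureOp I
  hJ : IsComplexStructureOp J
  hK : IsComplexStructureOp K
  hIJ : ∀ x, I (J x) = K x

/-- The Obata connection `∇_X` as an endomorphism of `L`: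
`∇_X Y = ½([X,Y] + I[IX,Y] − J[X,JY] + K[IX,JY])`. -/
noncomputable def obataOp (I J K : L →ₗ[ℝ] L) (X : L) : Module.End ℝ L :=
  (1/2 : ℝ) • (LieAlgebra.ad ℝ L X + I ∘ₗ LieAlgebra.ad ℝ L (I X)
    - J ∘ₗ LieAlgebra.ad ℝ L X ∘ₗ J + K ∘ₗ LieAlgebra.ad ℝ L (I X) ∘ₗ J)

/-- Flatness of the Obata connection. -/
def ObataFlat (I J K : L →ₗ[ℝ] L) : Prop :=
  ∀ X Y Z : L, obataOp I J K X (obataOp I J K Y Z) - obataOp I J K Y (obataOp I J K X Z)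
    = obataOp I J K ⁅X, Y⁆ Z

/-- The set of brackets of elements of a subspace `W`. -/
def bracketSet (W : Submodule ℝ L) : Set L := {z : L | ∃ x ∈ W, ∃ y ∈ W, z = ⁅x, y⁆}

/-- `H[W,W] = span([W,W] ∪ I[W,W] ∪ J[W,W] ∪ K[W,W])`. -/
def Hbr (I J K : L →ₗ[ℝ] L) (W : Submodule ℝ L) : Submodule ℝ L :=
  span ℝ (bracketSet W ∪ I '' bracketSet W ∪ J '' bracketSet W ∪ K '' bracketSet W)

/-- The descending series `g_0^H = g`, `g_i^H = H[g_{i-1}^H, g_{i-1}^H]`. -/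
def gH (I J K : L →ₗ[ℝ] L) : ℕ → Submodule ℝ L
  | 0 => ⊤
  | i + 1 => Hbr I J K (gH I J K i)

end Hyper


/-!
Flatness makes `X ↦ ∇_X` a representation of `g` on itself, and Engel's theorem turns the
unipotency of the holonomy into the termination of the descending series
`V_0 = g`, `V_{n+1} = span {∇_X v | v ∈ V_n}`. Since `∇` is torsion-free and commutes with
`I`, `J`, `K`, every `T ∈ {id, I, J, K}` satisfies `T[x,y] = ∇_x(Ty) − ∇_y(Tx)`, so by induction
`g_n^H ⊆ V_n`.
-/

attribute [local instance 100] LieRing.ofAssociativeRing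

namespace IsHypercomplex

variable {L : Type*} [LieRing L] [LieAlgebra ℝ L] {I J K : L →ₗ[ℝ] L}

lemma J_I_J_apply (h : IsHypercomplex I J K) (y : L) : J (I (J y)) = I y := by
  have hI_inj : Function.Injective I := fun a b hab => by
    simpa [h.hI.1] using congrArg I hab
  apply hI_inj
  rw [h.hIJ, h.hIJ y, h.hK.1, h.hI.1]

lemma J_I_apply (h : IsHypercomplex I J K) (y : L) : J (I y) = -K y := by
  have := h.J_I_J_apply (J y)
  rwa [h.hJ.1, map_neg, map_neg, h.hIJ, neg_eq_iff_eq_neg] at this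

lemma I_K_apply (h : IsHypercomplex I J K) (y : L) : I (K y) = -J y := by
  rw [← h.hIJ y, h.hI.1]

lemma K_I_apply (h : IsHypercomplex I J K) (y : L) : K (I y) = J y := by
  rw [← h.hIJ (I y), h.J_I_apply, map_neg, h.I_K_apply, neg_neg]

lemma K_J_apply (h : IsHypercomplex I J K) (y : L) : K (J y) = -I y := by
  rw [← h.hIJ (J y), h.hJ.1, map_neg]

lemma J_K_apply (h : IsHypercomplex I J K) (y : L) : J (K y) = I y := by
  rw [← h.hIJ y, h.J_I_J_apply]

end IsHypercomplex

section Obata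

variable {L : Type*} [LieRing L] [LieAlgebra ℝ L] {I J K : L →ₗ[ℝ] L}

lemma obataOp_apply (I J K : L →ₗ[ℝ] L) (X Y : L) :
    obataOp I J K X Y = (1/2 : ℝ) • (⁅X, Y⁆ + I ⁅I X, Y⁆ - J ⁅X, J Y⁆ + K ⁅I X, J Y⁆) := by
  simp [obataOp]

lemma obataOp_add (I J K : L →ₗ[ℝ] L) (X X' : L) :
    obataOp I J K (X + X') = obataOp I J K X + obataOp I J K X' := by
  ext Y
  simp only [LinearMap.add_apply, obataOp_apply, map_add, add_lie, ← smul_add]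
  congr 1
  abel

lemma obataOp_smul (I J K : L →ₗ[ℝ] L) (t : ℝ) (X : L) :
    obataOp I J K (t • X) = t • obataOp I J K X := by
  ext Y
  simp only [LinearMap.smul_apply, obataOp_apply, map_smul, smul_lie, ← smul_add, ← smul_sub]
  rw [smul_comm]

noncomputable def obataLieHom (I J K : L →ₗ[ℝ] L) (hflat : ObataFlat I J K) :
    L →ₗ⁅ℝ⁆ Module.End ℝ L where
  toFun := obataOp I J K
  map_add' := obataOp_add I J K
  map_smul' := obataOp_smul I J K
  map_lie' {X Y} := LinearMap.ext fun Z => (hflat X Y Z).symm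

lemma obataOp_sub_obataOp_swap (h : IsHypercomplex I J K) (X Y : L) :
    obataOp I J K X Y - obataOp I J K Y X = ⁅X, Y⁆ := by
  have hI : I ⁅I X, Y⁆ = ⁅I X, I Y⁆ - ⁅X, Y⁆ - I ⁅X, I Y⁆ := by
    rw [h.hI.2 X Y]; abel
  have hJ : J ⁅X, J Y⁆ = ⁅J X, J Y⁆ - ⁅X, Y⁆ - J ⁅J X, Y⁆ := by
    rw [h.hJ.2 X Y]; abel
  have hK : K ⁅I X, J Y⁆ = ⁅J X, J Y⁆ - ⁅I X, I Y⁆ - K ⁅J X, I Y⁆ := by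
    have := h.hK.2 (J X) (J Y)
    simp only [h.K_J_apply, neg_lie, lie_neg, neg_neg, map_neg] at this
    rw [this]; abel
  rw [obataOp_apply, obataOp_apply, ← smul_sub, ← lie_skew Y X, ← lie_skew (I Y) X,
    ← lie_skew Y (J X), ← lie_skew (I Y) (J X), hI, hJ, hK]
  simp only [map_neg]
  rw [show (1/2 : ℝ) = 2⁻¹ by norm_num, inv_smul_eq_iff₀ two_ne_zero, two_smul]
  abel

lemma commute_obataOp_I (h : IsHypercomplex I J K) (X : L) : Commute (obataOp I J K X) I := by
  ext Y
  simp only [Module.End.mul_apply, obataOp_apply, map_smul]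
  congr 1
  have hII : I ⁅I X, I Y⁆ = I ⁅X, Y⁆ - ⁅I X, Y⁆ - ⁅X, I Y⁆ := by
    rw [h.hI.2 X Y, map_add, map_add, h.hI.1, h.hI.1]; abel
  have hKK : K ⁅I X, K Y⁆ = K ⁅X, J Y⁆ + J ⁅I X, J Y⁆ + J ⁅X, K Y⁆ := by
    rw [← h.hIJ Y, h.hI.2 X (J Y), map_add, map_add, h.K_I_apply, h.K_I_apply]
  rw [h.J_I_apply]
  simp only [map_add, map_sub, lie_neg, map_neg, h.hI.1, h.I_K_apply, h.hIJ]
  rw [hII, hKK]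
  abel

lemma commute_obataOp_J (h : IsHypercomplex I J K) (X : L) : Commute (obataOp I J K X) J := by
  ext Y
  simp only [Module.End.mul_apply, obataOp_apply, map_smul, h.hJ.1, map_add, map_sub, lie_neg,
    map_neg, h.J_I_apply, h.J_K_apply]
  congr 1
  abel

lemma commute_obataOp_K (h : IsHypercomplex I J K) (X : L) : Commute (obataOp I J K X) K := by
  have hK : K = I * J := LinearMap.ext fun Y => (h.hIJ Y).symm
  have := (commute_obataOp_I h X).mul_right (commute_obataOp_J h X)
  rwa [← hK] at this

end Obata

section RepresentationSeries

variable {R L M : Type*} [CommRing R] [LieRing L] [LieAlgebra R L] [AddCommGroup M] [Module R M]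

/-- The lower central series of the `L`-module `M` defined by `f`, stated without that module
structure, which for `M = L` would clash with the adjoint action. -/
def repLowerCentralSeries (f : L →ₗ⁅R⁆ Module.End R M) : ℕ → Submodule R M
  | 0 => ⊤
  | n + 1 => span R {z : M | ∃ x : L, ∃ m ∈ repLowerCentralSeries f n, z = f x m}

lemma apply_mem_repLowerCentralSeries_succ (f : L →ₗ⁅R⁆ Module.End R M) {n : ℕ} (x : L) {m : M}
    (hm : m ∈ repLowerCentralSeries f n) : f x m ∈ repLowerCentralSeries f (n + 1) :=
  subset_span ⟨x, m, hm, rfl⟩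

lemma map_le_repLowerCentralSeries (f : L →ₗ⁅R⁆ Module.End R M) {T : Module.End R M}
    (hT : ∀ x, Commute (f x) T) :
    ∀ n, (repLowerCentralSeries f n).map T ≤ repLowerCentralSeries f n
  | 0 => le_top
  | n + 1 => by
    rw [repLowerCentralSeries, map_span_le]
    rintro _ ⟨x, m, hm, rfl⟩
    rw [← Module.End.mul_apply, ← (hT x).eq]
    exact apply_mem_repLowerCentralSeries_succ f x
      (map_le_repLowerCentralSeries f hT n (mem_map_of_mem hm))

lemma exists_repLowerCentralSeries_eq_bot [IsNoetherian R L] (f : L →ₗ⁅R⁆ Module.End R M)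
    (hnil : ∀ x, IsNilpotent (f x)) : ∃ k, repLowerCentralSeries f k = ⊥ := by
  let _ : LieRingModule L M := LieRingModule.compLieHom M f
  let _ : LieModule R L M := LieModule.compLieHom M f
  have : LieModule.IsNilpotent L M := LieAlgebra.isEngelian_of_isNoetherian M hnil
  obtain ⟨k, hk⟩ := LieModule.IsNilpotent.nilpotent R L M
  have hle (n : ℕ) :
      repLowerCentralSeries f n ≤ (LieModule.lowerCentralSeries R L M n).toSubmodule := by
    induction n with
    | zero => exact le_top
    | succ n ih =>
      refine span_le.mpr ?_
      rintro _ ⟨x, m, hm, rfl⟩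
      rw [SetLike.mem_coe, LieSubmodule.mem_toSubmodule, LieModule.lowerCentralSeries_succ]
      exact LieSubmodule.lie_mem_lie (LieSubmodule.mem_top x) (ih hm)
  exact ⟨k, eq_bot_iff.mpr (by simpa [hk] using hle k)⟩

lemma apply_lie_mem_repLowerCentralSeries_succ (f : L →ₗ⁅R⁆ Module.End R L)
    (htors : ∀ x y, f x y - f y x = ⁅x, y⁆)
    {T : Module.End R L} (hT : ∀ x, Commute (f x) T) {n : ℕ} {x y : L}
    (hx : x ∈ repLowerCentralSeries f n) (hy : y ∈ repLowerCentralSeries f n) :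
    T ⁅x, y⁆ ∈ repLowerCentralSeries f (n + 1) := by
  have hTx := map_le_repLowerCentralSeries f hT n (mem_map_of_mem hx)
  have hTy := map_le_repLowerCentralSeries f hT n (mem_map_of_mem hy)
  rw [← htors, map_sub, ← Module.End.mul_apply, ← Module.End.mul_apply, ← (hT x).eq, ← (hT y).eq]
  exact sub_mem (apply_mem_repLowerCentralSeries_succ f x hTy)
    (apply_mem_repLowerCentralSeries_succ f y hTx)

end RepresentationSeries

lemma gH_le_repLowerCentralSeries_obataLieHom {L : Type*} [LieRing L] [LieAlgebra ℝ L]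
    {I J K : L →ₗ[ℝ] L} (h : IsHypercomplex I J K) (hflat : ObataFlat I J K) :
    ∀ n, gH I J K n ≤ repLowerCentralSeries (obataLieHom I J K hflat) n
  | 0 => le_top
  | n + 1 => span_le.mpr <| by
    have mem_of_commute {T : Module.End ℝ L} (hT : ∀ X, Commute (obataOp I J K X) T) {u : L}
        (hu : u ∈ bracketSet (gH I J K n)) :
        T u ∈ repLowerCentralSeries (obataLieHom I J K hflat) (n + 1) := by
      obtain ⟨x, hx, y, hy, rfl⟩ := hu
      exact apply_lie_mem_repLowerCentralSeries_succ _ (obataOp_sub_obataOp_swap h) hT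
        (gH_le_repLowerCentralSeries_obataLieHom h hflat n hx)
        (gH_le_repLowerCentralSeries_obataLieHom h hflat n hy)
    rintro u (((hu | ⟨v, hv, rfl⟩) | ⟨v, hv, rfl⟩) | ⟨v, hv, rfl⟩)
    · exact mem_of_commute (T := 1) (fun X => Commute.one_right _) hu
    · exact mem_of_commute (commute_obataOp_I h) hv
    · exact mem_of_commute (commute_obataOp_J h) hv
    · exact mem_of_commute (commute_obataOp_K h) hv

theorem hsolvable_of_flat_unipotent_general {L : Type*} [LieRing L] [LieAlgebra ℝ L]
    [FiniteDimensional ℝ L]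
    (I J K : L →ₗ[ℝ] L) (h : IsHypercomplex I J K)
    (hflat : ObataFlat I J K)
    (hnil : ∀ X : L, IsNilpotent (obataOp I J K X)) :
    ∃ k : ℕ, gH I J K k = ⊥ := by
  obtain ⟨k, hk⟩ := exists_repLowerCentralSeries_eq_bot (obataLieHom I J K hflat) hnil
  exact ⟨k, eq_bot_iff.mpr (hk ▸ gH_le_repLowerCentralSeries_obataLieHom h hflat k)⟩

/-- a finite-dimensional nilpotent hypercomplex real Lie algebra with flat
Obata connection and unipotent algebraic holonomy (each `∇_X` nilpotent) is H-solvable. -/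
theorem hsolvable_of_flat_unipotent {L : Type*} [LieRing L] [LieAlgebra ℝ L]
    [FiniteDimensional ℝ L] [LieRing.IsNilpotent L]
    (I J K : L →ₗ[ℝ] L) (h : IsHypercomplex I J K)
    (hflat : ObataFlat I J K)
    (hnil : ∀ X : L, IsNilpotent (obataOp I J K X)) :
    ∃ k : ℕ, gH I J K k = ⊥ :=
  hsolvable_of_flat_unipotent_general I J K h hflat hnil
end

section
/- Let g be a real Lie algebra with a hypercomplex structure (I,J,K). Then the subspace H[g,g] = span([g,g] ∪ I[g,g] ∪ J[g,g] ∪ K[g,g]) is a Lie ideal of g and is invariant under I, J, and K. -/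
open Submodule

/-!
Every bracket `⁅x, y⁆` already lies in `[g,g] ⊆ H[g,g]`, so `H[g,g]` is an ideal for free.
Invariance comes from the multiplication table of the quaternion units: each of `I`, `J`, `K`
sends a generator `s`, `I s`, `J s`, `K s` (with `s ∈ [g,g]`) to plus or minus another one.
-/

section Quaternion

variable {R M : Type*} [Ring R] [AddCommGroup M] [Module R M]

structure IsQuaternionTriple (I J K : M →ₗ[R] M) : Prop where
  I_I : ∀ x, I (I x) = -x
  J_J : ∀ x, J (J x) = -x
  K_K : ∀ x, K (K x) = -x
  I_J : ∀ x, I (J x) = K x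

namespace IsQuaternionTriple

variable {I J K : M →ₗ[R] M}

theorem I_K (hq : IsQuaternionTriple I J K) (x : M) : I (K x) = -J x := by
  rw [← hq.I_J, hq.I_I]

theorem K_J (hq : IsQuaternionTriple I J K) (x : M) : K (J x) = -I x := by
  rw [← hq.I_J, hq.J_J, map_neg]

theorem K_I (hq : IsQuaternionTriple I J K) (x : M) : K (I x) = J x := by
  have h := hq.K_K (J x)
  rw [hq.K_J, map_neg] at h
  exact neg_injective h

theorem J_I (hq : IsQuaternionTriple I J K) (x : M) : J (I x) = -K x := by
  rw [← hq.K_I, hq.I_I, map_neg]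

theorem J_K (hq : IsQuaternionTriple I J K) (x : M) : J (K x) = I x := by
  rw [← hq.I_J, hq.J_I, hq.K_J, neg_neg]

end IsQuaternionTriple

def quaternionSpan (I J K : M →ₗ[R] M) (S : Set M) : Submodule R M :=
  span R (S ∪ I '' S ∪ J '' S ∪ K '' S)

variable {I J K : M →ₗ[R] M} {S : Set M}

theorem subset_quaternionSpan : S ⊆ quaternionSpan I J K S :=
  fun _ hs => subset_span (Or.inl (Or.inl (Or.inl hs)))

theorem image_I_subset_quaternionSpan : I '' S ⊆ quaternionSpan I J K S :=
  fun _ hs => subset_span (Or.inl (Or.inl (Or.inr hs)))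

theorem image_J_subset_quaternionSpan : J '' S ⊆ quaternionSpan I J K S :=
  fun _ hs => subset_span (Or.inl (Or.inr hs))

theorem image_K_subset_quaternionSpan : K '' S ⊆ quaternionSpan I J K S :=
  fun _ hs => subset_span (Or.inr hs)

theorem Submodule.apply_mem_span_of_forall {T : M →ₗ[R] M} {s : Set M}
    (hT : ∀ x ∈ s, T x ∈ span R s) {y : M} (hy : y ∈ span R s) : T y ∈ span R s :=
  (span_le (p := (span R s).comap T)).2 hT hy

namespace IsQuaternionTriple

theorem I_mem_quaternionSpan (hq : IsQuaternionTriple I J K) {y : M}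
    (hy : y ∈ quaternionSpan I J K S) : I y ∈ quaternionSpan I J K S := by
  refine apply_mem_span_of_forall ?_ hy
  rintro _ (((hs | ⟨s, hs, rfl⟩) | ⟨s, hs, rfl⟩) | ⟨s, hs, rfl⟩)
  · exact image_I_subset_quaternionSpan ⟨_, hs, rfl⟩
  · rw [hq.I_I]; exact neg_mem (subset_quaternionSpan hs)
  · rw [hq.I_J]; exact image_K_subset_quaternionSpan ⟨s, hs, rfl⟩
  · rw [hq.I_K]; exact neg_mem (image_J_subset_quaternionSpan ⟨s, hs, rfl⟩)

theorem J_mem_quaternionSpan (hq : IsQuaternionTriple I J K) {y : M}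
    (hy : y ∈ quaternionSpan I J K S) : J y ∈ quaternionSpan I J K S := by
  refine apply_mem_span_of_forall ?_ hy
  rintro _ (((hs | ⟨s, hs, rfl⟩) | ⟨s, hs, rfl⟩) | ⟨s, hs, rfl⟩)
  · exact image_J_subset_quaternionSpan ⟨_, hs, rfl⟩
  · rw [hq.J_I]; exact neg_mem (image_K_subset_quaternionSpan ⟨s, hs, rfl⟩)
  · rw [hq.J_J]; exact neg_mem (subset_quaternionSpan hs)
  · rw [hq.J_K]; exact image_I_subset_quaternionSpan ⟨s, hs, rfl⟩

theorem K_mem_quaternionSpan (hq : IsQuaternionTriple I J K) {y : M}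
    (hy : y ∈ quaternionSpan I J K S) : K y ∈ quaternionSpan I J K S := by
  refine apply_mem_span_of_forall ?_ hy
  rintro _ (((hs | ⟨s, hs, rfl⟩) | ⟨s, hs, rfl⟩) | ⟨s, hs, rfl⟩)
  · exact image_K_subset_quaternionSpan ⟨_, hs, rfl⟩
  · rw [hq.K_I]; exact image_J_subset_quaternionSpan ⟨s, hs, rfl⟩
  · rw [hq.K_J]; exact neg_mem (image_I_subset_quaternionSpan ⟨s, hs, rfl⟩)
  · rw [hq.K_K]; exact neg_mem (subset_quaternionSpan hs)

end IsQuaternionTriple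

end Quaternion

section Hypercomplex

variable {L : Type*} [LieRing L] [LieAlgebra ℝ L]

theorem IsHypercomplex.isQuaternionTriple {I J K : L →ₗ[ℝ] L} (h : IsHypercomplex I J K) :
    IsQuaternionTriple I J K :=
  ⟨h.hI.1, h.hJ.1, h.hK.1, h.hIJ⟩

theorem lie_mem_Hbr_top (I J K : L →ₗ[ℝ] L) (x y : L) : ⁅x, y⁆ ∈ Hbr I J K ⊤ :=
  subset_quaternionSpan ⟨x, trivial, y, trivial, rfl⟩

end Hypercomplex

/-- `H[g,g]` is a Lie ideal of `g`, invariant under `I`, `J` and `K`. -/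
theorem Hbr_top_isIdeal_invariant {L : Type*} [LieRing L] [LieAlgebra ℝ L]
    (I J K : L →ₗ[ℝ] L) (h : IsHypercomplex I J K) :
    (∀ (x : L), ∀ y ∈ Hbr I J K ⊤, ⁅x, y⁆ ∈ Hbr I J K ⊤) ∧
    (∀ y ∈ Hbr I J K ⊤, I y ∈ Hbr I J K ⊤) ∧
    (∀ y ∈ Hbr I J K ⊤, J y ∈ Hbr I J K ⊤) ∧
    (∀ y ∈ Hbr I J K ⊤, K y ∈ Hbr I J K ⊤) := by
  have hq := h.isQuaternionTriple
  exact ⟨fun x y _ => lie_mem_Hbr_top I J K x y, fun _ => hq.I_mem_quaternionSpan,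
    fun _ => hq.J_mem_quaternionSpan, fun _ => hq.K_mem_quaternionSpan⟩
end

section
/- Let g be a real Lie algebra with a hypercomplex structure (I,J,K). Then for every i ≥ 0 the subspace g_i^H is a Lie subalgebra of g which is invariant under I, J, and K. -/
open Submodule

/-!
Each `g_i^H` is built as the real span of a set together with its images under `I`, `J`, `K`.
By the quaternionic relations, `I`, `J`, `K` permute these four families of generators up to
sign, so any such span is `I`, `J`, `K`-invariant. Inductively, if `g_i^H` is an invariant
subalgebra then `g_{i+1}^H = H[g_i^H, g_i^H] ⊆ g_i^H`, hence `[g_{i+1}^H, g_{i+1}^H]` lies in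
`[g_i^H, g_i^H] ⊆ g_{i+1}^H`.
-/

namespace IsHypercomplex

variable {L : Type*} [LieRing L] [LieAlgebra ℝ L] {I J K : L →ₗ[ℝ] L}

theorem I_K (h : IsHypercomplex I J K) (x : L) : I (K x) = -J x := by
  rw [← h.hIJ, h.hI.1]

theorem J_I_J (h : IsHypercomplex I J K) (x : L) : J (I (J x)) = I x := by
  have hK2 : I (J (I (J x))) = -x := by rw [h.hIJ, h.hIJ, h.hK.1]
  simpa [h.hI.1] using congrArg (fun y => -I y) hK2

theorem J_I (h : IsHypercomplex I J K) (x : L) : J (I x) = -K x := by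
  have := h.J_I_J (J x)
  rwa [h.hJ.1, map_neg, map_neg, h.hIJ, neg_eq_iff_eq_neg] at this

theorem J_K (h : IsHypercomplex I J K) (x : L) : J (K x) = I x := by
  rw [← h.hIJ, h.J_I_J]

theorem K_I (h : IsHypercomplex I J K) (x : L) : K (I x) = J x := by
  rw [← h.hIJ, h.J_I, map_neg, h.I_K, neg_neg]

theorem K_J (h : IsHypercomplex I J K) (x : L) : K (J x) = -I x := by
  rw [← h.hIJ, h.hJ.1, map_neg]

end IsHypercomplex

section QuatSpan

variable {L : Type*} [AddCommGroup L] [Module ℝ L] (I J K : L →ₗ[ℝ] L)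

def quatSpan (S : Set L) : Submodule ℝ L :=
  span ℝ (S ∪ I '' S ∪ J '' S ∪ K '' S)

variable {I J K} {S : Set L}

theorem subset_quatSpan : S ⊆ quatSpan I J K S :=
  fun _ hs => subset_span (Or.inl (Or.inl (Or.inl hs)))

theorem I_mem_quatSpan {s : L} (hs : s ∈ S) : I s ∈ quatSpan I J K S :=
  subset_span (Or.inl (Or.inl (Or.inr ⟨s, hs, rfl⟩)))

theorem J_mem_quatSpan {s : L} (hs : s ∈ S) : J s ∈ quatSpan I J K S :=
  subset_span (Or.inl (Or.inr ⟨s, hs, rfl⟩))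

theorem K_mem_quatSpan {s : L} (hs : s ∈ S) : K s ∈ quatSpan I J K S :=
  subset_span (Or.inr ⟨s, hs, rfl⟩)

theorem quatSpan_le {W : Submodule ℝ L} (hS : S ⊆ W) (hI : ∀ y ∈ W, I y ∈ W)
    (hJ : ∀ y ∈ W, J y ∈ W) (hK : ∀ y ∈ W, K y ∈ W) : quatSpan I J K S ≤ W := by
  rw [quatSpan, span_le]
  rintro _ (((hs | ⟨s, hs, rfl⟩) | ⟨s, hs, rfl⟩) | ⟨s, hs, rfl⟩)
  exacts [hS hs, hI s (hS hs), hJ s (hS hs), hK s (hS hs)]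

theorem map_mem_quatSpan {T : L →ₗ[ℝ] L}
    (hT : ∀ s ∈ S, T s ∈ quatSpan I J K S ∧ T (I s) ∈ quatSpan I J K S ∧
      T (J s) ∈ quatSpan I J K S ∧ T (K s) ∈ quatSpan I J K S)
    {y : L} (hy : y ∈ quatSpan I J K S) : T y ∈ quatSpan I J K S := by
  have hle : quatSpan I J K S ≤ (quatSpan I J K S).comap T := by
    rw [quatSpan, span_le]
    rintro _ (((hs | ⟨s, hs, rfl⟩) | ⟨s, hs, rfl⟩) | ⟨s, hs, rfl⟩)
    exacts [(hT _ hs).1, (hT s hs).2.1, (hT s hs).2.2.1, (hT s hs).2.2.2]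
  exact hle hy

end QuatSpan

section Invariance

variable {L : Type*} [LieRing L] [LieAlgebra ℝ L] {I J K : L →ₗ[ℝ] L} {S : Set L}

theorem IsHypercomplex.I_mem_quatSpan_of_mem (h : IsHypercomplex I J K) {y : L}
    (hy : y ∈ quatSpan I J K S) : I y ∈ quatSpan I J K S := by
  refine map_mem_quatSpan (fun s hs => ⟨I_mem_quatSpan hs, ?_, ?_, ?_⟩) hy
  · rw [h.hI.1]; exact neg_mem (subset_quatSpan hs)
  · rw [h.hIJ]; exact K_mem_quatSpan hs
  · rw [h.I_K]; exact neg_mem (J_mem_quatSpan hs)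

theorem IsHypercomplex.J_mem_quatSpan_of_mem (h : IsHypercomplex I J K) {y : L}
    (hy : y ∈ quatSpan I J K S) : J y ∈ quatSpan I J K S := by
  refine map_mem_quatSpan (fun s hs => ⟨J_mem_quatSpan hs, ?_, ?_, ?_⟩) hy
  · rw [h.J_I]; exact neg_mem (K_mem_quatSpan hs)
  · rw [h.hJ.1]; exact neg_mem (subset_quatSpan hs)
  · rw [h.J_K]; exact I_mem_quatSpan hs

theorem IsHypercomplex.K_mem_quatSpan_of_mem (h : IsHypercomplex I J K) {y : L}
    (hy : y ∈ quatSpan I J K S) : K y ∈ quatSpan I J K S := by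
  refine map_mem_quatSpan (fun s hs => ⟨K_mem_quatSpan hs, ?_, ?_, ?_⟩) hy
  · rw [h.K_I]; exact J_mem_quatSpan hs
  · rw [h.K_J]; exact neg_mem (I_mem_quatSpan hs)
  · rw [h.hK.1]; exact neg_mem (subset_quatSpan hs)

def IsInvariantSubalgebra (I J K : L →ₗ[ℝ] L) (W : Submodule ℝ L) : Prop :=
  (∀ x ∈ W, ∀ y ∈ W, ⁅x, y⁆ ∈ W) ∧ (∀ y ∈ W, I y ∈ W) ∧ (∀ y ∈ W, J y ∈ W) ∧
    (∀ y ∈ W, K y ∈ W)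

theorem isInvariantSubalgebra_top : IsInvariantSubalgebra I J K ⊤ :=
  ⟨fun _ _ _ _ => mem_top, fun _ _ => mem_top, fun _ _ => mem_top, fun _ _ => mem_top⟩

theorem Hbr_eq_quatSpan (W : Submodule ℝ L) : Hbr I J K W = quatSpan I J K (bracketSet W) :=
  rfl

theorem IsInvariantSubalgebra.Hbr_le {W : Submodule ℝ L} (hW : IsInvariantSubalgebra I J K W) :
    Hbr I J K W ≤ W :=
  quatSpan_le (by rintro _ ⟨x, hx, y, hy, rfl⟩; exact hW.1 x hx y hy) hW.2.1 hW.2.2.1 hW.2.2.2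

theorem IsInvariantSubalgebra.Hbr (h : IsHypercomplex I J K) {W : Submodule ℝ L}
    (hW : IsInvariantSubalgebra I J K W) : IsInvariantSubalgebra I J K (Hbr I J K W) := by
  rw [Hbr_eq_quatSpan]
  refine ⟨fun x hx y hy => subset_quatSpan ⟨x, hW.Hbr_le hx, y, hW.Hbr_le hy, rfl⟩,
    fun _ => h.I_mem_quatSpan_of_mem, fun _ => h.J_mem_quatSpan_of_mem,
    fun _ => h.K_mem_quatSpan_of_mem⟩

end Invariance

/-- each `g_i^H` is a Lie subalgebra of `g`, invariant under `I`, `J`, `K`. -/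
theorem gH_subalgebra_invariant {L : Type*} [LieRing L] [LieAlgebra ℝ L]
    (I J K : L →ₗ[ℝ] L) (h : IsHypercomplex I J K) :
    ∀ i : ℕ,
      (∀ x ∈ gH I J K i, ∀ y ∈ gH I J K i, ⁅x, y⁆ ∈ gH I J K i) ∧
      (∀ y ∈ gH I J K i, I y ∈ gH I J K i) ∧
      (∀ y ∈ gH I J K i, J y ∈ gH I J K i) ∧
      (∀ y ∈ gH I J K i, K y ∈ gH I J K i) := by
  intro i
  induction i with
  | zero => exact isInvariantSubalgebra_top
  | succ n ih => exact IsInvariantSubalgebra.Hbr h ih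
end
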